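/- arXiv:1810.03496 — 2 statements merged into one kernel-verified Lean document; each statement's English description precedes it below -/
import Mathlib

section
/- Let Q : [0,1] → ℝ have an absolutely continuous derivative q that is continuous on [0,1] with Q(p) = ∫_0^p q(x) dx. Define Q_n(p) = ∑_{k=0}^n (q(k/n)/(n+1)) * F_{k,n}(p), where F_{k,n}(p) = ∫_0^p (Γ(n+2)/(Γ(k+1)Γ(n-k+1))) x^k (1-x)^{n-k} dx is the Beta(k+1, n-k+1) cumulative distribution function. Then for every p ∈ [0,1], Q_n(p) → Q(p) as n → ∞. -/
open Finset Filter intervalIntegral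

open scoped unitInterval

/-!
Up to the factor `n + 1`, the Beta density `x ^ k (1 - x) ^ (n - k)` normalized by the Gamma
quotient is the Bernstein basis polynomial `C(n, k) x ^ k (1 - x) ^ (n - k)`. Hence `Q_n(p)` is
the integral over `[0, p]` of the `n`-th Bernstein polynomial of `q`, which converges to `q`
uniformly on `[0, 1]` (Weierstrass–Bernstein), so its integral converges to `∫₀ᵖ q = Q(p)`.
-/

noncomputable def bernsteinPoly (f : ℝ → ℝ) (n : ℕ) (x : ℝ) : ℝ :=
  ∑ k ∈ range (n + 1), f (k / n) * (n.choose k * x ^ k * (1 - x) ^ (n - k))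

noncomputable def betaDensity (n k : ℕ) (x : ℝ) : ℝ :=
  Real.Gamma ((n : ℝ) + 2) / (Real.Gamma ((k : ℝ) + 1) * Real.Gamma ((n : ℝ) - (k : ℝ) + 1))
    * x ^ k * (1 - x) ^ (n - k)

theorem continuous_bernsteinPoly (f : ℝ → ℝ) (n : ℕ) : Continuous (bernsteinPoly f n) := by
  unfold bernsteinPoly
  fun_prop

theorem bernsteinApproximation_domRestrict_apply {f : ℝ → ℝ} (hf : ContinuousOn f (Set.Icc 0 1))
    (n : ℕ) (x : I) :
    bernsteinApproximation n ⟨(Set.Icc 0 1).domRestrict f, hf.domRestrict⟩ x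
      = bernsteinPoly f n x := by
  rw [bernsteinApproximation.apply, bernsteinPoly,
    ← Fin.sum_univ_eq_sum_range (fun k => f (k / n) * (n.choose k * x ^ k * (1 - x) ^ (n - k)))]
  refine Finset.sum_congr rfl fun k _ => ?_
  rw [bernstein_apply, smul_eq_mul, mul_comm]
  rfl

theorem tendstoUniformlyOn_bernsteinPoly {f : ℝ → ℝ} (hf : ContinuousOn f (Set.Icc 0 1)) :
    TendstoUniformlyOn (bernsteinPoly f) f atTop (Set.Icc 0 1) := by
  refine tendstoUniformlyOn_iff_restrict.mpr ?_
  convert ContinuousMap.tendsto_iff_tendstoUniformly.mp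
    (bernsteinApproximation_uniform ⟨(Set.Icc 0 1).domRestrict f, hf.domRestrict⟩) using 1
  · ext n x
    exact (bernsteinApproximation_domRestrict_apply hf n x).symm
  · rfl

theorem Gamma_quotient_eq_succ_mul_choose {n k : ℕ} (hk : k ≤ n) :
    Real.Gamma ((n : ℝ) + 2) / (Real.Gamma ((k : ℝ) + 1) * Real.Gamma ((n : ℝ) - (k : ℝ) + 1))
      = ((n : ℝ) + 1) * n.choose k := by
  have h_succ : (n : ℝ) + 2 = ((n + 1 : ℕ) : ℝ) + 1 := by push_cast; ring
  have h_sub : (n : ℝ) - (k : ℝ) + 1 = ((n - k : ℕ) : ℝ) + 1 := by push_cast [hk]; ring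
  rw [h_succ, h_sub, Real.Gamma_nat_eq_factorial, Real.Gamma_nat_eq_factorial,
    Real.Gamma_nat_eq_factorial, Nat.cast_choose ℝ hk, Nat.factorial_succ]
  push_cast
  field_simp

theorem betaDensity_eq_succ_mul_bernstein {n k : ℕ} (hk : k ≤ n) (x : ℝ) :
    betaDensity n k x = ((n : ℝ) + 1) * (n.choose k * x ^ k * (1 - x) ^ (n - k)) := by
  rw [betaDensity, Gamma_quotient_eq_succ_mul_choose hk]
  ring

theorem sum_div_succ_mul_betaDensity (f : ℝ → ℝ) (n : ℕ) (x : ℝ) :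
    ∑ k ∈ range (n + 1), f (k / n) / ((n : ℝ) + 1) * betaDensity n k x = bernsteinPoly f n x := by
  refine Finset.sum_congr rfl fun k hk => ?_
  rw [betaDensity_eq_succ_mul_bernstein (Nat.lt_succ_iff.mp (mem_range.mp hk))]
  field_simp

theorem sum_div_succ_mul_integral_betaDensity (f : ℝ → ℝ) (n : ℕ) (p : ℝ) :
    ∑ k ∈ range (n + 1), f (k / n) / ((n : ℝ) + 1) * ∫ x in (0 : ℝ)..p, betaDensity n k x
      = ∫ x in (0 : ℝ)..p, bernsteinPoly f n x := by
  simp_rw [← sum_div_succ_mul_betaDensity, ← integral_const_mul]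
  refine (integral_finsetSum fun k _ => ?_).symm
  exact (by unfold betaDensity; fun_prop : Continuous _).intervalIntegrable 0 p

/-- Beta-CDF (Bernstein-type) expansions converge pointwise to the quantile
function `Q(p) = ∫_0^p q`. -/
theorem beta_cdf_expansion_tendsto (q Q : ℝ → ℝ)
    (hq : ContinuousOn q (Set.Icc 0 1))
    (hQ : ∀ p ∈ Set.Icc (0:ℝ) 1, Q p = ∫ x in (0:ℝ)..p, q x)
    (F : ℕ → ℕ → ℝ → ℝ)
    (hF : ∀ k n, ∀ p ∈ Set.Icc (0:ℝ) 1,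
      F k n p = ∫ x in (0:ℝ)..p,
        (Real.Gamma ((n:ℝ) + 2) / (Real.Gamma ((k:ℝ) + 1) * Real.Gamma ((n:ℝ) - (k:ℝ) + 1)))
          * x ^ k * (1 - x) ^ (n - k)) :
    ∀ p ∈ Set.Icc (0:ℝ) 1,
      Tendsto (fun (n : ℕ) =>
          ∑ k ∈ Finset.range (n + 1), (q ((k:ℝ) / n) / ((n:ℝ) + 1)) * F k n p)
        atTop (nhds (Q p)) := by
  intro p hp
  have h_sub : Set.uIcc 0 p ⊆ Set.Icc 0 1 := by
    rw [Set.uIcc_of_le hp.1]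
    exact Set.Icc_subset_Icc_right hp.2
  have h_sum (n : ℕ) : ∑ k ∈ range (n + 1), q (k / n) / ((n : ℝ) + 1) * F k n p
      = ∫ x in (0 : ℝ)..p, bernsteinPoly q n x := by
    rw [← sum_div_succ_mul_integral_betaDensity]
    simp only [hF _ n p hp, betaDensity]
  simp only [h_sum, hQ p hp]
  exact ((tendstoUniformlyOn_bernsteinPoly hq).mono h_sub).tendsto_intervalIntegral_of_continuousOn
    (.of_forall fun n => (continuous_bernsteinPoly q n).continuousOn)
end

section
/- Let F and G be cumulative distribution functions on ℝ with quantile functions F^{-1} and G^{-1}, and suppose ∫_0^1 |F^{-1}(p)|² dp and ∫_0^1 |G^{-1}(p)|² dp are finite. Let U be uniform on (0,1). Then the coupling (F^{-1}(U), G^{-1}(U)) attains the minimal L² distance among couplings in the sense that for any pair of random variables (X, Y) with X ~ F and Y ~ G defined on a common probability space, E[(X−Y)²] ≥ ∫_0^1 (F^{-1}(p) − G^{-1}(p))² dp. -/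
/-!
The square is a layer-cake integral over ordered pairs:
`(x - y)² = 2 λ²{y ≤ s < t < x} + 2 λ²{x ≤ s < t < y}`. By Tonelli, for any coupling
`E (X - Y)² = 2 ∫∫_{s<t} (P(Y ≤ s, t < X) + P(X ≤ s, t < Y)) ds dt`, and the same holds for the
quantile coupling `(F⁻¹(U), G⁻¹(U))`. So it suffices to compare integrands, which is the
Fréchet–Hoeffding bound: `{p ∈ (0,1) | G⁻¹ p ≤ s, t < F⁻¹ p} ⊆ (F t, G s]`, whose length
`(P(Y ≤ s) - P(X ≤ t))⁺` is at most `P(Y ≤ s, t < X)`.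
-/

open MeasureTheory Filter Set Topology

def orderedPairs (a b : ℝ) : Set (ℝ × ℝ) := {q | a ≤ q.1 ∧ q.1 < q.2 ∧ q.2 < b}

lemma measurableSet_setOf_mem_orderedPairs :
    MeasurableSet {x : (ℝ × ℝ) × ℝ × ℝ | x.2 ∈ orderedPairs x.1.1 x.1.2} := by
  unfold orderedPairs
  measurability

lemma measurableSet_orderedPairs (a b : ℝ) : MeasurableSet (orderedPairs a b) :=
  measurableSet_setOf_mem_orderedPairs.preimage (measurable_prodMk_left (x := (a, b)))

lemma measurable_volume_orderedPairs :
    Measurable fun x : ℝ × ℝ => volume (orderedPairs x.1 x.2) :=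
  measurable_measure_prodMk_left measurableSet_setOf_mem_orderedPairs

lemma orderedPairs_eq_regionBetween (a b : ℝ) :
    orderedPairs a b = regionBetween id (fun _ => b) (Icc a b) := by
  ext ⟨s, t⟩
  simp only [orderedPairs, regionBetween, mem_ofPred_eq, mem_Icc, mem_Ioo, id]
  constructor
  · rintro ⟨h₁, h₂, h₃⟩; exact ⟨⟨h₁, by linarith⟩, h₂, h₃⟩
  · rintro ⟨⟨h₁, -⟩, h₂, h₃⟩; exact ⟨h₁, h₂, h₃⟩

lemma volume_orderedPairs_of_le {a b : ℝ} (h : a ≤ b) :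
    volume (orderedPairs a b) = ENNReal.ofReal ((b - a) ^ 2 / 2) := by
  rw [orderedPairs_eq_regionBetween, Measure.volume_eq_prod,
    volume_regionBetween_eq_integral (continuous_id.integrableOn_Icc)
      (continuous_const.integrableOn_Icc) measurableSet_Icc fun x hx => hx.2,
    integral_Icc_eq_integral_Ioc, ← intervalIntegral.integral_of_le h]
  simp only [Pi.sub_apply, id, intervalIntegral.integral_sub intervalIntegrable_const
    intervalIntegral.intervalIntegrable_id, intervalIntegral.integral_const, integral_id]
  congr 1
  ring

lemma orderedPairs_eq_empty {a b : ℝ} (h : b ≤ a) : orderedPairs a b = ∅ :=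
  eq_empty_of_forall_notMem fun q ⟨h₁, h₂, h₃⟩ => by linarith

lemma ofReal_sq_sub_eq_volume_orderedPairs (x y : ℝ) :
    ENNReal.ofReal ((x - y) ^ 2)
      = 2 * volume (orderedPairs y x) + 2 * volume (orderedPairs x y) := by
  wlog h : y ≤ x generalizing x y
  · rw [add_comm, ← this y x (le_of_not_ge h), ← neg_sub, neg_sq]
  rw [volume_orderedPairs_of_le h, orderedPairs_eq_empty h, measure_empty, mul_zero, add_zero,
    ← ENNReal.ofReal_ofNat 2, ← ENNReal.ofReal_mul zero_le_two]
  ring_nf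

section LayerCake

variable {α : Type*} [MeasurableSpace α] {ν : Measure α} [SFinite ν] {f g : α → ℝ}

lemma lintegral_volume_orderedPairs (hf : AEMeasurable f ν) (hg : AEMeasurable g ν) :
    ∫⁻ a, volume (orderedPairs (g a) (f a)) ∂ν = ∫⁻ q, ν {a | q ∈ orderedPairs (g a) (f a)} := by
  have hfg : AEMeasurable (fun a => (g a, f a)) ν := hg.prodMk hf
  have hind : AEMeasurable
      (Function.uncurry fun a q => (orderedPairs (g a) (f a)).indicator (1 : ℝ × ℝ → ENNReal) q)
      (ν.prod volume) :=
    (measurable_one.indicator measurableSet_setOf_mem_orderedPairs).comp_aemeasurable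
      (hfg.comp_fst.prodMk measurable_snd.aemeasurable)
  calc ∫⁻ a, volume (orderedPairs (g a) (f a)) ∂ν
      = ∫⁻ a, ∫⁻ q, (orderedPairs (g a) (f a)).indicator 1 q ∂volume ∂ν := by
        simp_rw [lintegral_indicator_one (measurableSet_orderedPairs _ _)]
    _ = ∫⁻ q, ∫⁻ a, (orderedPairs (g a) (f a)).indicator 1 q ∂ν ∂volume :=
        lintegral_lintegral_swap hind
    _ = ∫⁻ q, ν {a | q ∈ orderedPairs (g a) (f a)} := by
        refine lintegral_congr fun q => ?_
        have hS : NullMeasurableSet {a | q ∈ orderedPairs (g a) (f a)} ν :=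
          (hfg.prodMk aemeasurable_const).nullMeasurableSet_preimage
            measurableSet_setOf_mem_orderedPairs
        rw [← lintegral_indicator_one₀ hS]
        rfl

lemma lintegral_ofReal_sq_sub_eq (hf : AEMeasurable f ν) (hg : AEMeasurable g ν) :
    ∫⁻ a, ENNReal.ofReal ((f a - g a) ^ 2) ∂ν
      = 2 * (∫⁻ q, ν {a | q ∈ orderedPairs (g a) (f a)})
        + 2 * ∫⁻ q, ν {a | q ∈ orderedPairs (f a) (g a)} := by
  simp_rw [ofReal_sq_sub_eq_volume_orderedPairs]
  have hvol : AEMeasurable (fun a => volume (orderedPairs (g a) (f a))) ν :=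
    measurable_volume_orderedPairs.comp_aemeasurable (hg.prodMk hf)
  rw [← lintegral_volume_orderedPairs hf hg, ← lintegral_volume_orderedPairs hg hf,
    lintegral_add_left' (hvol.const_mul 2), lintegral_const_mul' _ _ ENNReal.ofNat_ne_top,
    lintegral_const_mul' _ _ ENNReal.ofNat_ne_top]

end LayerCake

theorem lintegral_ofReal_sq_sub_le {α β : Type*} [MeasurableSpace α] [MeasurableSpace β]
    {ν : Measure α} {μ : Measure β} [SFinite ν] [SFinite μ] {f g : α → ℝ} {X Y : β → ℝ}
    (hf : AEMeasurable f ν) (hg : AEMeasurable g ν) (hX : AEMeasurable X μ)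
    (hY : AEMeasurable Y μ)
    (h₁ : ∀ q, ν {a | q ∈ orderedPairs (g a) (f a)} ≤ μ {ω | q ∈ orderedPairs (Y ω) (X ω)})
    (h₂ : ∀ q, ν {a | q ∈ orderedPairs (f a) (g a)} ≤ μ {ω | q ∈ orderedPairs (X ω) (Y ω)}) :
    ∫⁻ a, ENNReal.ofReal ((f a - g a) ^ 2) ∂ν ≤ ∫⁻ ω, ENNReal.ofReal ((X ω - Y ω) ^ 2) ∂μ := by
  rw [lintegral_ofReal_sq_sub_eq hf hg, lintegral_ofReal_sq_sub_eq hX hY]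
  gcongr with q
  exacts [h₁ q, h₂ q]

/-- Outside `(0, 1)` the set may be empty or unbounded below, and `sInf` returns the junk value 0. -/
noncomputable def quantile (F : ℝ → ℝ) (p : ℝ) : ℝ := sInf {y | p ≤ F y}

section Quantile

variable {F : ℝ → ℝ} {p : ℝ}

lemma quantile_le_of_le (hbot : Tendsto F atBot (𝓝 0)) (hp : 0 < p) {y : ℝ} (hy : p ≤ F y) :
    quantile F p ≤ y := by
  obtain ⟨M, hM⟩ := eventually_atBot.1 (hbot.eventually_lt_const hp)
  exact csInf_le ⟨M, fun z hz => le_of_not_gt fun hzM => (hM z hzM.le).not_ge hz⟩ hy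

lemma le_apply_quantile (hmono : Monotone F) (hrc : ∀ y, ContinuousWithinAt F (Ici y) y)
    (htop : Tendsto F atTop (𝓝 1)) (hp : p < 1) : p ≤ F (quantile F p) := by
  have hne : {y | p ≤ F y}.Nonempty := (htop.eventually_const_le hp).exists
  refine ge_of_tendsto ((hrc _).mono Ioi_subset_Ici_self)
    (eventually_nhdsWithin_of_forall fun w hw => ?_)
  obtain ⟨z, hz, hzw⟩ := exists_lt_of_csInf_lt hne hw
  exact hz.trans (hmono hzw.le)

lemma monotoneOn_quantile (hmono : Monotone F) (hrc : ∀ y, ContinuousWithinAt F (Ici y) y)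
    (hbot : Tendsto F atBot (𝓝 0)) (htop : Tendsto F atTop (𝓝 1)) :
    MonotoneOn (quantile F) (Ioo 0 1) := fun _ hp _ hq hpq =>
  quantile_le_of_le hbot hp.1 (hpq.trans (le_apply_quantile hmono hrc htop hq.2))

end Quantile

lemma restrict_setOf_mem_orderedPairs_quantile_le {F G : ℝ → ℝ}
    (hFbot : Tendsto F atBot (𝓝 0)) (hGmono : Monotone G)
    (hGrc : ∀ y, ContinuousWithinAt G (Ici y) y) (hGtop : Tendsto G atTop (𝓝 1))
    {Ω : Type*} [MeasurableSpace Ω] {μ : Measure Ω} [IsFiniteMeasure μ] {X Y : Ω → ℝ}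
    (hXF : ∀ y, (μ {ω | X ω ≤ y}).toReal = F y) (hYG : ∀ y, (μ {ω | Y ω ≤ y}).toReal = G y)
    (q : ℝ × ℝ) :
    volume.restrict (Ioo 0 1) {p | q ∈ orderedPairs (quantile G p) (quantile F p)}
      ≤ μ {ω | q ∈ orderedPairs (Y ω) (X ω)} := by
  obtain ⟨s, t⟩ := q
  by_cases hst : s < t
  swap
  · simp [orderedPairs, hst]
  have hsub : {p | (s, t) ∈ orderedPairs (quantile G p) (quantile F p)} ∩ Ioo 0 1
      ⊆ Ioc (F t) (G s) := by
    rintro p ⟨⟨hGs, -, hFt⟩, hp⟩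
    exact ⟨lt_of_not_ge fun h => hFt.not_ge (quantile_le_of_le hFbot hp.1 h),
      (le_apply_quantile hGmono hGrc hGtop hp.2).trans (hGmono hGs)⟩
  have hdiff : {ω | Y ω ≤ s} \ {ω | X ω ≤ t} = {ω | (s, t) ∈ orderedPairs (Y ω) (X ω)} := by
    ext ω
    simp [orderedPairs, hst]
  calc volume.restrict (Ioo 0 1) {p | (s, t) ∈ orderedPairs (quantile G p) (quantile F p)}
      ≤ volume (Ioc (F t) (G s)) := by
        rw [Measure.restrict_apply' measurableSet_Ioo]; exact measure_mono hsub
    _ = ENNReal.ofReal (μ.real {ω | Y ω ≤ s} - μ.real {ω | X ω ≤ t}) := by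
        rw [Real.volume_Ioc, ← hXF, ← hYG]; rfl
    _ ≤ ENNReal.ofReal (μ.real ({ω | Y ω ≤ s} \ {ω | X ω ≤ t})) :=
        ENNReal.ofReal_le_ofReal le_measureReal_sdiff
    _ = μ {ω | (s, t) ∈ orderedPairs (Y ω) (X ω)} := by rw [ofReal_measureReal, hdiff]

theorem quantile_coupling_optimal_general
    (F G Finv Ginv : ℝ → ℝ)
    (hFmono : Monotone F) (hFrc : ∀ y, ContinuousWithinAt F (Set.Ici y) y)
    (hFbot : Tendsto F atBot (nhds 0)) (hFtop : Tendsto F atTop (nhds 1))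
    (hGmono : Monotone G) (hGrc : ∀ y, ContinuousWithinAt G (Set.Ici y) y)
    (hGbot : Tendsto G atBot (nhds 0)) (hGtop : Tendsto G atTop (nhds 1))
    (hFinv : ∀ p, Finv p = sInf {y : ℝ | p ≤ F y})
    (hGinv : ∀ p, Ginv p = sInf {y : ℝ | p ≤ G y})
    {Ω : Type*} [MeasurableSpace Ω] (μ : Measure Ω) [IsProbabilityMeasure μ]
    (X Y : Ω → ℝ) (hX : Measurable X) (hY : Measurable Y)
    (hXF : ∀ y, (μ {ω | X ω ≤ y}).toReal = F y)
    (hYG : ∀ y, (μ {ω | Y ω ≤ y}).toReal = G y) :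
    ∫⁻ p in Set.Ioo (0:ℝ) 1, ENNReal.ofReal ((Finv p - Ginv p) ^ 2)
      ≤ ∫⁻ ω, ENNReal.ofReal ((X ω - Y ω) ^ 2) ∂μ := by
  obtain rfl : Finv = quantile F := funext hFinv
  obtain rfl : Ginv = quantile G := funext hGinv
  exact lintegral_ofReal_sq_sub_le
    (aemeasurable_restrict_of_monotoneOn measurableSet_Ioo
      (monotoneOn_quantile hFmono hFrc hFbot hFtop))
    (aemeasurable_restrict_of_monotoneOn measurableSet_Ioo
      (monotoneOn_quantile hGmono hGrc hGbot hGtop))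
    hX.aemeasurable hY.aemeasurable
    (restrict_setOf_mem_orderedPairs_quantile_le hFbot hGmono hGrc hGtop hXF hYG)
    (restrict_setOf_mem_orderedPairs_quantile_le hGbot hFmono hFrc hFtop hYG hXF)

/-- The monotone (quantile) coupling minimizes the L² cost: for any coupling
`(X, Y)` of `F` and `G`, `E[(X-Y)²] ≥ ∫_0^1 (F⁻¹(p) - G⁻¹(p))² dp`. -/
theorem quantile_coupling_optimal
    (F G Finv Ginv : ℝ → ℝ)
    (hFmono : Monotone F) (hFrc : ∀ y, ContinuousWithinAt F (Set.Ici y) y)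
    (hFbot : Tendsto F atBot (nhds 0)) (hFtop : Tendsto F atTop (nhds 1))
    (hGmono : Monotone G) (hGrc : ∀ y, ContinuousWithinAt G (Set.Ici y) y)
    (hGbot : Tendsto G atBot (nhds 0)) (hGtop : Tendsto G atTop (nhds 1))
    (hFinv : ∀ p, Finv p = sInf {y : ℝ | p ≤ F y})
    (hGinv : ∀ p, Ginv p = sInf {y : ℝ | p ≤ G y})
    (hFsq : IntegrableOn (fun p => (Finv p) ^ 2) (Set.Ioo 0 1) volume)
    (hGsq : IntegrableOn (fun p => (Ginv p) ^ 2) (Set.Ioo 0 1) volume)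
    {Ω : Type*} [MeasurableSpace Ω] (μ : Measure Ω) [IsProbabilityMeasure μ]
    (X Y : Ω → ℝ) (hX : Measurable X) (hY : Measurable Y)
    (hXF : ∀ y, (μ {ω | X ω ≤ y}).toReal = F y)
    (hYG : ∀ y, (μ {ω | Y ω ≤ y}).toReal = G y) :
    ∫⁻ p in Set.Ioo (0:ℝ) 1, ENNReal.ofReal ((Finv p - Ginv p) ^ 2)
      ≤ ∫⁻ ω, ENNReal.ofReal ((X ω - Y ω) ^ 2) ∂μ :=
  quantile_coupling_optimal_general F G Finv Ginv hFmono hFrc hFbot hFtop hGmono hGrc hGbot hGtop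
    hFinv hGinv μ X Y hX hY hXF hYG
end
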